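/- arXiv:2202.06546 — 6 statements merged into one kernel-verified Lean document; each statement's English description precedes it below -/
import Mathlib

section
/- Every monotone function f : P → P on a directed-complete partial order P with a least element has a least fixed point. -/
/-- **Pataraia's theorem.** Every monotone function on a directed-complete partial
order with a least element has a least fixed point. -/
theorem pataraia_least_fixed_point {P : Type*} [PartialOrder P] [OrderBot P]
    (hdcpo : ∀ D : Set P, D.Nonempty → DirectedOn (· ≤ ·) D → ∃ s, IsLUB D s)
    (f : P → P) (hf : Monotone f) :
    ∃ x : P, f x = x ∧ ∀ y : P, f y = y → x ≤ y := by
  set A : Set P := {x | x ≤ f x ∧ ∀ y, f y = y → x ≤ y} with hA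
  have hbot : (⊥ : P) ∈ A := ⟨bot_le, fun y _ => bot_le⟩
  obtain ⟨m, _, hmA, hmax⟩ := zorn_le_nonempty₀ A
    (fun c hcA hc y hy => by
      obtain ⟨s, hs⟩ := hdcpo c ⟨y, hy⟩ (hc.directedOn)
      refine ⟨s, ⟨?_, ?_⟩, fun z hz => hs.1 hz⟩
      · refine hs.2 fun x hx => ?_
        exact le_trans (hcA hx).1 (hf (hs.1 hx))
      · intro w hw
        exact hs.2 fun x hx => (hcA hx).2 w hw)
    ⊥ hbot
  have hfmA : f m ∈ A := ⟨hf hmA.1, fun y hy => hy ▸ hf (hmA.2 y hy)⟩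
  have := le_antisymm (hmax hfmA hmA.1) hmA.1
  exact ⟨m, this, hmA.2⟩
end

section
/- Let P be a dcpo with bottom and f : P → P monotone. If S ⊆ P contains ⊥, is closed under f, and is closed under suprema of directed subsets, then the least fixed point of f belongs to S. -/
/-- **Induction principle for least fixed points.** If `S` contains `⊥`, is closed
under `f` and under suprema of directed subsets, then the least fixed point of the
monotone map `f` belongs to `S`. -/
theorem lfp_mem_of_closed {P : Type*} [PartialOrder P] [OrderBot P]
    (hdcpo : ∀ D : Set P, D.Nonempty → DirectedOn (· ≤ ·) D → ∃ s, IsLUB D s)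
    (f : P → P) (hf : Monotone f) (S : Set P)
    (hbot : ⊥ ∈ S)
    (hfS : ∀ x ∈ S, f x ∈ S)
    (hsupS : ∀ D : Set P, D ⊆ S → D.Nonempty → DirectedOn (· ≤ ·) D →
      ∀ s, IsLUB D s → s ∈ S) :
    ∀ x : P, f x = x → (∀ y : P, f y = y → x ≤ y) → x ∈ S := by
  intro x hx hleast
  -- notion of a "closed" set
  set Closed : Set P → Prop := fun T =>
    ⊥ ∈ T ∧ (∀ y ∈ T, f y ∈ T) ∧
      (∀ D : Set P, D ⊆ T → D.Nonempty → DirectedOn (· ≤ ·) D →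
        ∀ s, IsLUB D s → s ∈ T) with hC
  -- the intersection of all closed sets
  set C : Set P := {y | ∀ T : Set P, Closed T → y ∈ T} with hCdef
  have hSclosed : Closed S := ⟨hbot, hfS, hsupS⟩
  have hCclosed : Closed C := by
    refine ⟨fun T hT => hT.1, fun y hy T hT => hT.2.1 y (hy T hT), ?_⟩
    intro D hD hne hdir s hs T hT
    exact hT.2.2 D (fun d hd => hD hd T hT) hne hdir s hs
  -- elements of C are below x
  have hle : Closed {y | y ≤ x} := by
    refine ⟨bot_le, fun y hy => ?_, ?_⟩
    · calc f y ≤ f x := hf hy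
        _ = x := hx
    · intro D hD hne hdir s hs
      exact hs.2 fun d hd => hD hd
  -- elements of C are below their image under f
  have hinfl : Closed {y | y ≤ f y} := by
    refine ⟨bot_le, fun y hy => hf hy, ?_⟩
    intro D hD hne hdir s hs
    refine hs.2 fun d hd => ?_
    calc d ≤ f d := hD hd
      _ ≤ f s := hf (hs.1 hd)
  -- Zorn's lemma inside C
  obtain ⟨m, -, hmC, hmax⟩ :=
    zorn_le_nonempty₀ C
      (fun c hcC hc y hyc => by
        obtain ⟨s, hs⟩ := hdcpo c ⟨y, hyc⟩ (hc.directedOn)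
        exact ⟨s, hCclosed.2.2 c hcC ⟨y, hyc⟩ hc.directedOn s hs, fun z hz => hs.1 hz⟩)
      ⊥ hCclosed.1
  have hmfix : f m = m :=
    le_antisymm (hmax (hCclosed.2.1 m hmC) (hmC _ hinfl)) (hmC _ hinfl)
  have : x = m := le_antisymm (hleast m hmfix) (hmC _ hle)
  exact this ▸ hmC S hSclosed
end

section
/- Let P and Q be dcpos with bottom, f : P → P and g : Q → Q monotone, and h : P → Q a strict continuous map (h(⊥) = ⊥ and h preserves directed suprema) with g ∘ h = h ∘ f. Then h maps the least fixed point of f to the least fixed point of g. -/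
/-- **Uniformity of least fixed points.** A strict continuous map `h` intertwining
monotone endofunctions `f` and `g` of dcpos with bottom maps the least fixed point
of `f` to the least fixed point of `g`. -/
theorem lfp_uniformity {P Q : Type*} [PartialOrder P] [OrderBot P]
    [PartialOrder Q] [OrderBot Q]
    (hdcpoP : ∀ D : Set P, D.Nonempty → DirectedOn (· ≤ ·) D → ∃ s, IsLUB D s)
    (hdcpoQ : ∀ D : Set Q, D.Nonempty → DirectedOn (· ≤ ·) D → ∃ s, IsLUB D s)
    (f : P → P) (hf : Monotone f) (g : Q → Q) (hg : Monotone g)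
    (h : P → Q) (hmono : Monotone h) (hstrict : h ⊥ = ⊥)
    (hcont : ∀ D : Set P, D.Nonempty → DirectedOn (· ≤ ·) D →
      ∀ s, IsLUB D s → IsLUB (h '' D) (h s))
    (hcomm : ∀ x : P, g (h x) = h (f x)) :
    ∀ x : P, f x = x → (∀ x' : P, f x' = x' → x ≤ x') →
    ∀ y : Q, g y = y → (∀ y' : Q, g y' = y' → y ≤ y') →
    h x = y := by
  intro x hx hxleast y hy hyleast
  -- `h x` is a fixed point of `g`, so `y ≤ h x`.
  have hy_le : y ≤ h x := hyleast _ (by rw [hcomm, hx])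
  -- For the other direction, apply Zorn to T = {p | p ≤ f p ∧ h p ≤ y}.
  set T : Set P := {p | p ≤ f p ∧ h p ≤ y} with hT
  obtain ⟨m, hm⟩ : ∃ m, Maximal (· ∈ T) m := by
    apply zorn_le₀
    intro c hcT hc
    rcases c.eq_empty_or_nonempty with rfl | hne
    · exact ⟨⊥, ⟨bot_le, by rw [hstrict]; exact bot_le⟩, fun z hz => hz.elim⟩
    · have hdir : DirectedOn (· ≤ ·) c := hc.directedOn
      obtain ⟨s, hs⟩ := hdcpoP c hne hdir
      refine ⟨s, ⟨?_, ?_⟩, fun z hz => hs.1 hz⟩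
      · -- s ≤ f s since f s is an upper bound of c
        apply hs.2
        intro z hz
        exact le_trans (hcT hz).1 (hf (hs.1 hz))
      · -- h s ≤ y since y is an upper bound of h '' c
        exact (hcont c hne hdir s hs).2 (fun q ⟨p, hp, hpq⟩ => hpq ▸ (hcT hp).2)
  -- m is a fixed point of f
  have hmT : m ∈ T := hm.1
  have hfmT : f m ∈ T := ⟨hf hmT.1, by rw [← hcomm]; exact le_trans (hg hmT.2) (le_of_eq hy)⟩
  have hfm : f m = m := le_antisymm (hm.2 hfmT hmT.1) hmT.1
  have : h x ≤ y := le_trans (hmono (hxleast m hfm)) hmT.2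
  exact le_antisymm this hy_le
end

section
/- Let F be a locally monotone endofunctor on a category C whose hom-sets are dcpos with bottom, where composition is continuous in each argument and satisfies ⊥ ∘ f = ⊥ (left strictness). If (I, ι) is an initial F-algebra, then (I, ι⁻¹) is a terminal F-coalgebra. -/
open CategoryTheory CategoryTheory.Limits

/-- A subset closed under `⊥`, `f`, and lubs of nonempty directed subsets. -/
def PataraiaClosed {α : Type*} [PartialOrder α] [OrderBot α] (f : α → α) (T : Set α) : Prop :=
  ⊥ ∈ T ∧ (∀ x ∈ T, f x ∈ T) ∧
    ∀ D ⊆ T, D.Nonempty → DirectedOn (· ≤ ·) D → ∀ s, IsLUB D s → s ∈ T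

/-- Pataraia's fixed point theorem, with the induction principle. -/
theorem pataraia {α : Type*} [PartialOrder α] [OrderBot α]
    (hd : ∀ D : Set α, D.Nonempty → DirectedOn (· ≤ ·) D → ∃ s, IsLUB D s)
    (f : α → α) (hf : Monotone f) :
    ∃ μ, f μ = μ ∧ ∀ T, PataraiaClosed f T → μ ∈ T := by
  classical
  set S : Set α := {x | ∀ T, PataraiaClosed f T → x ∈ T} with hS
  have hSclosed : PataraiaClosed f S := by
    refine ⟨fun T hT => hT.1, fun x hx T hT => hT.2.1 x (hx T hT), ?_⟩
    intro D hD hDne hDdir s hs T hT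
    exact hT.2.2 D (fun y hy => hD hy T hT) hDne hDdir s hs
  -- every element of S is a post-fixed point: x ≤ f x
  have hinfl : ∀ x ∈ S, x ≤ f x := by
    have : PataraiaClosed f {x | x ∈ S ∧ x ≤ f x} := by
      refine ⟨⟨hSclosed.1, bot_le⟩, fun x hx => ⟨hSclosed.2.1 x hx.1, hf hx.2⟩, ?_⟩
      intro D hD hDne hDdir s hs
      refine ⟨hSclosed.2.2 D (fun y hy => (hD hy).1) hDne hDdir s hs, ?_⟩
      refine hs.2 fun y hy => ?_
      exact le_trans (hD hy).2 (hf (hs.1 hy))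
    exact fun x hx => (hx _ this).2
  -- the set of monotone inflationary maps on S
  set σ := {x : α // x ∈ S}
  set M : Set (σ → σ) := {g | Monotone g ∧ ∀ x, x ≤ g x} with hM
  have hidM : (id : σ → σ) ∈ M := ⟨monotone_id, fun x => le_refl x⟩
  have hcompM : ∀ g ∈ M, ∀ g' ∈ M, (g ∘ g') ∈ M := by
    intro g hg g' hg'
    exact ⟨hg.1.comp hg'.1, fun x => le_trans (hg'.2 x) (hg.2 _)⟩
  -- pointwise sup of M
  have key : ∀ x : σ, ∃ s : σ, IsLUB {y : α | ∃ g ∈ M, ((g x : σ) : α) = y} (s : α) := by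
    intro x
    set D : Set α := {y : α | ∃ g ∈ M, ((g x : σ) : α) = y} with hD
    have hDne : D.Nonempty := ⟨(x : α), id, hidM, rfl⟩
    have hDS : D ⊆ S := by rintro y ⟨g, hg, rfl⟩; exact (g x).2
    have hDdir : DirectedOn (· ≤ ·) D := by
      rintro _ ⟨g, hg, rfl⟩ _ ⟨g', hg', rfl⟩
      refine ⟨((g ∘ g') x : σ), ⟨g ∘ g', hcompM g hg g' hg', rfl⟩, ?_, ?_⟩
      · exact hg.1 (hg'.2 x)
      · exact hg.2 _
    obtain ⟨s, hs⟩ := hd D hDne hDdir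
    exact ⟨⟨s, hSclosed.2.2 D hDS hDne hDdir s hs⟩, hs⟩
  choose t ht using key
  have htinfl : ∀ x : σ, x ≤ t x := fun x => (ht x).1 ⟨id, hidM, rfl⟩
  have htmono : Monotone t := by
    intro x y hxy
    refine (ht x).2 ?_
    rintro _ ⟨g, hg, rfl⟩
    exact le_trans (hg.1 hxy) ((ht y).1 ⟨g, hg, rfl⟩)
  have htM : t ∈ M := ⟨htmono, htinfl⟩
  -- f restricted to S
  set fS : σ → σ := fun x => ⟨f x, hSclosed.2.1 _ x.2⟩ with hfS
  have hfSM : fS ∈ M := ⟨fun x y h => hf h, fun x => hinfl _ x.2⟩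
  have hcomp : (fS ∘ t) ∈ M := hcompM fS hfSM t htM
  have hfix : ∀ x : σ, fS (t x) = t x := by
    intro x
    have h1 : ((fS ∘ t) x : α) ≤ (t x : α) := (ht x).1 ⟨fS ∘ t, hcomp, rfl⟩
    have h2 : (t x : α) ≤ ((fS (t x)) : α) := hinfl _ (t x).2
    exact Subtype.ext (le_antisymm h1 h2)
  refine ⟨(t ⟨⊥, hSclosed.1⟩ : σ), ?_, fun T hT => (t ⟨⊥, hSclosed.1⟩).2 T hT⟩
  exact congrArg Subtype.val (hfix ⟨⊥, hSclosed.1⟩)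


/-- In a left strictly `DCPO⊥`-enriched category (hom-sets are dcpos with bottom,
composition is continuous in each argument and `⊥ ∘ f = ⊥`), for a locally monotone
endofunctor `F`, if `(I, ι)` is an initial `F`-algebra then `(I, ι⁻¹)` is a terminal
`F`-coalgebra. -/
theorem initial_algebra_is_terminal_coalgebra
    {C : Type*} [Category C]
    [∀ A B : C, PartialOrder (A ⟶ B)] [∀ A B : C, OrderBot (A ⟶ B)]
    (hdcpo : ∀ (A B : C) (D : Set (A ⟶ B)), D.Nonempty → DirectedOn (· ≤ ·) D →
      ∃ s, IsLUB D s)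
    (hbot : ∀ {A B X : C} (f : X ⟶ A), f ≫ (⊥ : A ⟶ B) = ⊥)
    (hcontPre : ∀ {A B X : C} (f : X ⟶ A) (D : Set (A ⟶ B)),
      D.Nonempty → DirectedOn (· ≤ ·) D →
      ∀ s, IsLUB D s → IsLUB ((fun g => f ≫ g) '' D) (f ≫ s))
    (hcontPost : ∀ {A B Y : C} (f : B ⟶ Y) (D : Set (A ⟶ B)),
      D.Nonempty → DirectedOn (· ≤ ·) D →
      ∀ s, IsLUB D s → IsLUB ((fun g => g ≫ f) '' D) (s ≫ f))
    (F : C ⥤ C)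
    (hlocmono : ∀ {A B : C} (f g : A ⟶ B), f ≤ g → F.map f ≤ F.map g)
    (Alg : Endofunctor.Algebra F) (hinit : IsInitial Alg)
    (ι' : Alg.a ⟶ F.obj Alg.a)
    (hι'₁ : Alg.str ≫ ι' = 𝟙 (F.obj Alg.a))
    (hι'₂ : ι' ≫ Alg.str = 𝟙 Alg.a) :
    Nonempty (IsTerminal ({ V := Alg.a, str := ι' } : Endofunctor.Coalgebra F)) := by
  classical
  -- monotonicity of composition in each argument
  have pairlub : ∀ {A B : C} {g₁ g₂ : A ⟶ B}, g₁ ≤ g₂ →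
      ({g₁, g₂} : Set (A ⟶ B)).Nonempty ∧ DirectedOn (· ≤ ·) ({g₁, g₂} : Set (A ⟶ B)) ∧
        IsLUB ({g₁, g₂} : Set (A ⟶ B)) g₂ := by
    intro A B g₁ g₂ hg
    have hub : ∀ x ∈ ({g₁, g₂} : Set (A ⟶ B)), x ≤ g₂ := by
      intro x hx
      simp only [Set.mem_insert_iff, Set.mem_singleton_iff] at hx
      rcases hx with rfl | rfl
      · exact hg
      · exact le_refl _
    refine ⟨⟨g₁, by simp⟩, ?_, ?_⟩
    · intro x hx y hy
      exact ⟨g₂, by simp, hub x hx, hub y hy⟩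
    · exact ⟨fun x hx => hub x hx, fun b hb => hb (by simp)⟩
  have monoPre : ∀ {A B X : C} (f : X ⟶ A) {g₁ g₂ : A ⟶ B}, g₁ ≤ g₂ → f ≫ g₁ ≤ f ≫ g₂ := by
    intro A B X f g₁ g₂ hg
    obtain ⟨hne, hdir, hlub⟩ := pairlub hg
    exact (hcontPre f _ hne hdir g₂ hlub).1 ⟨g₁, by simp, rfl⟩
  have monoPost : ∀ {A B Y : C} (f : B ⟶ Y) {g₁ g₂ : A ⟶ B}, g₁ ≤ g₂ → g₁ ≫ f ≤ g₂ ≫ f := by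
    intro A B Y f g₁ g₂ hg
    obtain ⟨hne, hdir, hlub⟩ := pairlub hg
    exact (hcontPost f _ hne hdir g₂ hlub).1 ⟨g₁, by simp, rfl⟩
  -- the map Ψ on I ⟶ I whose unique fixed point is the identity
  have hΨmono : Monotone (fun e : Alg.a ⟶ Alg.a => ι' ≫ F.map e ≫ Alg.str) :=
    fun e₁ e₂ he => monoPre ι' (monoPost Alg.str (hlocmono _ _ he))
  obtain ⟨ν, hνfix, hνind⟩ := pataraia (hdcpo Alg.a Alg.a) _ hΨmono
  have hνfix' : ι' ≫ F.map ν ≫ Alg.str = ν := hνfix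
  have hν1 : ν = 𝟙 Alg.a := by
    have halg : F.map ν ≫ Alg.str = Alg.str ≫ ν := by
      conv_rhs => rw [← hνfix']
      rw [show Alg.str ≫ ι' ≫ F.map ν ≫ Alg.str
            = (Alg.str ≫ ι') ≫ F.map ν ≫ Alg.str from by simp only [Category.assoc],
          hι'₁, Category.id_comp]
    have : ({ f := ν, h := halg } : Alg ⟶ Alg) = 𝟙 Alg := hinit.hom_ext _ _
    exact congrArg Endofunctor.Algebra.Hom.f this
  -- existence and uniqueness of coalgebra morphisms into (I, ι')
  have exuniq : ∀ (Y : Endofunctor.Coalgebra F),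
      ∃! h : Y.V ⟶ Alg.a, Y.str ≫ F.map h = h ≫ ι' := by
    intro Y
    have hΦmono : Monotone (fun h : Y.V ⟶ Alg.a => Y.str ≫ F.map h ≫ Alg.str) :=
      fun h₁ h₂ hh => monoPre Y.str (monoPost Alg.str (hlocmono _ _ hh))
    obtain ⟨μ, hμfix, hμind⟩ := pataraia (hdcpo Y.V Alg.a) _ hΦmono
    have hμfix' : Y.str ≫ F.map μ ≫ Alg.str = μ := hμfix
    -- fixed points of Φ are exactly coalgebra morphisms
    have fix_iff : ∀ h : Y.V ⟶ Alg.a,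
        Y.str ≫ F.map h ≫ Alg.str = h ↔ Y.str ≫ F.map h = h ≫ ι' := by
      intro h
      constructor
      · intro hfix
        conv_rhs => rw [← hfix]
        simp only [Category.assoc, hι'₁, Category.comp_id]
      · intro hc
        rw [← Category.assoc, hc, Category.assoc, hι'₂, Category.comp_id]
    refine ⟨μ, (fix_iff μ).1 hμfix', ?_⟩
    intro h hh
    have hfixh : Y.str ≫ F.map h ≫ Alg.str = h := (fix_iff h).2 hh
    -- μ ≤ h by leastness (induction with the downset of h)
    have hle1 : μ ≤ h := by
      refine hμind {x | x ≤ h} ⟨bot_le, ?_, ?_⟩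
      · intro x hx
        show Y.str ≫ F.map x ≫ Alg.str ≤ h
        calc Y.str ≫ F.map x ≫ Alg.str
            ≤ Y.str ≫ F.map h ≫ Alg.str := hΦmono hx
          _ = h := hfixh
      · intro D hD hDne hDdir s hs
        exact hs.2 hD
    -- h ≤ μ via the induction principle for Ψ
    have hle2 : h ≤ μ := by
      have hmem : ν ∈ {e : Alg.a ⟶ Alg.a | h ≫ e ≤ μ} := by
        refine hνind _ ⟨?_, ?_, ?_⟩
        · show h ≫ (⊥ : Alg.a ⟶ Alg.a) ≤ μ
          rw [hbot h]; exact bot_le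
        · intro e he
          show h ≫ ι' ≫ F.map e ≫ Alg.str ≤ μ
          have heq : h ≫ ι' ≫ F.map e ≫ Alg.str = Y.str ≫ F.map (h ≫ e) ≫ Alg.str := by
            calc h ≫ ι' ≫ F.map e ≫ Alg.str
                = (h ≫ ι') ≫ F.map e ≫ Alg.str := by simp only [Category.assoc]
              _ = (Y.str ≫ F.map h) ≫ F.map e ≫ Alg.str := by rw [hh]
              _ = Y.str ≫ F.map (h ≫ e) ≫ Alg.str := by
                  rw [F.map_comp]; simp only [Category.assoc]
          rw [heq]
          calc Y.str ≫ F.map (h ≫ e) ≫ Alg.str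
              ≤ Y.str ≫ F.map μ ≫ Alg.str := hΦmono he
            _ = μ := hμfix'
        · intro D hD hDne hDdir s hs
          show h ≫ s ≤ μ
          refine (hcontPre h D hDne hDdir s hs).2 ?_
          rintro _ ⟨e, he, rfl⟩
          exact hD he
      have : h ≫ ν ≤ μ := hmem
      rwa [hν1, Category.comp_id] at this
    exact le_antisymm hle2 hle1
  refine ⟨IsTerminal.ofUniqueHom
    (fun Y => ⟨(exuniq Y).choose, by exact (exuniq Y).choose_spec.1⟩) ?_⟩
  intro Y m
  have h1 : m.f = (exuniq Y).choose := (exuniq Y).choose_spec.2 m.f (by exact m.h)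
  exact Endofunctor.Coalgebra.Hom.ext h1
end

section
/- Let T be a monad on a category C, F an endofunctor on C with an extension F̄ to the Kleisli category Kl(T) (i.e. F̄ ∘ J = J ∘ F where J : C → Kl(T) is the canonical functor). If (μF, ι) is an initial F-algebra in C, then (μF, J(ι)) is an initial F̄-algebra in Kl(T). -/
/-!
Hermida–Jacobs: if `φ : L ⋙ G ≅ F ⋙ L` for an adjunction `L ⊣ R`, then `L` lifts to a functor
from `F`-algebras to `G`-algebras, and a `G`-algebra `(B, b)` induces an `F`-algebra on `R B` whose
structure map is the transpose of `L (F (R B)) ≅ G (L (R B)) ⟶ G B ⟶ B`. Transposition then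
identifies `G`-algebra maps `L A ⟶ B` with `F`-algebra maps `A ⟶ R B`, so the lift preserves
initial algebras. The Kleisli case is `J ⊣ U` with `φ` given by the extension `F̄`.
-/

open CategoryTheory CategoryTheory.Limits

namespace CategoryTheory.Endofunctor.Algebra

variable {C D : Type*} [Category C] [Category D] {L : C ⥤ D} {R : D ⥤ C}
  {F : C ⥤ C} {G : D ⥤ D}

abbrev liftAlong (φ : L ⋙ G ≅ F ⋙ L) (A : Algebra F) : Algebra G where
  a := L.obj A.a
  str := φ.hom.app A.a ≫ L.map A.str

abbrev transposeAlong (adj : L ⊣ R) (φ : L ⋙ G ≅ F ⋙ L) (B : Algebra G) : Algebra F where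
  a := R.obj B.a
  str := adj.homEquiv _ _ (φ.inv.app (R.obj B.a) ≫ G.map (adj.counit.app B.a) ≫ B.str)

variable (adj : L ⊣ R) (φ : L ⋙ G ≅ F ⋙ L)

theorem homEquiv_symm_comp_transposeAlong_str {X : C} {B : Algebra G} (g : X ⟶ R.obj B.a) :
    (adj.homEquiv _ _).symm (F.map g ≫ (transposeAlong adj φ B).str) =
      φ.inv.app X ≫ G.map ((adj.homEquiv _ _).symm g) ≫ B.str := by
  rw [adj.homEquiv_naturality_left_symm, Equiv.symm_apply_apply, ← Functor.comp_map F L,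
    φ.inv.naturality_assoc, Functor.comp_map, Adjunction.homEquiv_counit, G.map_comp,
    Category.assoc]

theorem isHom_liftAlong_iff {A : Algebra F} {B : Algebra G} (f : L.obj A.a ⟶ B.a) :
    G.map f ≫ B.str = (liftAlong φ A).str ≫ f ↔
      F.map (adj.homEquiv _ _ f) ≫ (transposeAlong adj φ B).str = A.str ≫ adj.homEquiv _ _ f := by
  rw [← (adj.homEquiv _ _).symm.injective.eq_iff, homEquiv_symm_comp_transposeAlong_str,
    adj.homEquiv_naturality_left_symm, Equiv.symm_apply_apply, ← Iso.app_inv, Iso.inv_comp_eq,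
    Iso.app_hom, Category.assoc]

def liftAlongHomEquiv {A : Algebra F} {B : Algebra G} :
    (liftAlong φ A ⟶ B) ≃ (A ⟶ transposeAlong adj φ B) where
  toFun g := ⟨adj.homEquiv _ _ g.f, (isHom_liftAlong_iff adj φ g.f).mp g.h⟩
  invFun g := ⟨(adj.homEquiv _ _).symm g.f, by
    rw [isHom_liftAlong_iff adj φ, Equiv.apply_symm_apply]
    exact g.h⟩
  left_inv g := by ext; exact Equiv.symm_apply_apply _ _
  right_inv g := by ext; exact Equiv.apply_symm_apply _ _

def isInitialLiftAlong {A : Algebra F} (h : IsInitial A) : IsInitial (liftAlong φ A) :=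
  IsInitial.ofUniqueHom (fun _ => (liftAlongHomEquiv adj φ).symm (h.to _))
    fun _ _ => (liftAlongHomEquiv adj φ).injective (h.hom_ext _ _)

end CategoryTheory.Endofunctor.Algebra

namespace CategoryTheory.Kleisli

def extensionIso {C : Type*} [Category C] {T : Monad C} {F : C ⥤ C}
    {Fbar : Kleisli T ⥤ Kleisli T}
    (hobj : ∀ X : C, Fbar.obj ((Adjunction.toKleisli T).obj X) =
      (Adjunction.toKleisli T).obj (F.obj X))
    (hmap : ∀ {X Y : C} (f : X ⟶ Y),
      Fbar.map ((Adjunction.toKleisli T).map f) =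
        eqToHom (hobj X) ≫ (Adjunction.toKleisli T).map (F.map f) ≫ eqToHom (hobj Y).symm) :
    Adjunction.toKleisli T ⋙ Fbar ≅ F ⋙ Adjunction.toKleisli T :=
  NatIso.ofComponents (fun X => eqToIso (hobj X)) fun f => by simp [hmap]

end CategoryTheory.Kleisli

/-- If an endofunctor `F` on `C` has an extension `F̄` to the Kleisli category of a
monad `T` (i.e. `F̄ ∘ J = J ∘ F` for the canonical functor `J : C → Kl(T)`), then an
initial `F`-algebra `(μF, ι)` yields an initial `F̄`-algebra `(μF, J ι)`. -/
theorem initial_algebra_lifts_to_kleisli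
    {C : Type*} [Category C] (T : Monad C) (F : C ⥤ C)
    (Fbar : Kleisli T ⥤ Kleisli T)
    (hobj : ∀ X : C, Fbar.obj ((Kleisli.Adjunction.toKleisli T).obj X) =
      (Kleisli.Adjunction.toKleisli T).obj (F.obj X))
    (hmap : ∀ {X Y : C} (f : X ⟶ Y),
      Fbar.map ((Kleisli.Adjunction.toKleisli T).map f) =
        eqToHom (hobj X) ≫ (Kleisli.Adjunction.toKleisli T).map (F.map f) ≫
          eqToHom (hobj Y).symm)
    (Alg : Endofunctor.Algebra F) (hinit : IsInitial Alg) :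
    Nonempty (IsInitial
      ({ a := (Kleisli.Adjunction.toKleisli T).obj Alg.a,
         str := eqToHom (hobj Alg.a) ≫ (Kleisli.Adjunction.toKleisli T).map Alg.str } :
        Endofunctor.Algebra Fbar)) :=
  ⟨Endofunctor.Algebra.isInitialLiftAlong (Kleisli.Adjunction.adj T)
    (Kleisli.extensionIso hobj hmap) hinit⟩
end

section
/- If q : F ⇒ G is a natural transformation with epimorphic components between endofunctors on C, λ : FT ⇒ TF is a distributive law of F over a monad T, and ρ_X : GTX → TGX is a family of morphisms satisfying ρ_X ∘ q_{TX} = T(q_X) ∘ λ_X for all X, then ρ is natural and is a distributive law of G over T. -/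
open CategoryTheory

/-- Distributive laws descend along componentwise-epimorphic quotients of functors:
if `q : F ⟶ G` has epimorphic components, `λ : FT ⟶ TF` is a distributive law of `F`
over the monad `T`, and the family `ρ_X : GTX ⟶ TGX` satisfies
`ρ_X ∘ q_{TX} = T q_X ∘ λ_X`, then `ρ` is natural and a distributive law of `G`
over `T`. -/
theorem distributive_law_of_quotient {C : Type*} [Category C] (T : Monad C)
    (F G : C ⥤ C) (q : F ⟶ G) [∀ X : C, Epi (q.app X)]
    (lam : (T.toFunctor ⋙ F) ⟶ (F ⋙ T.toFunctor))
    (hunit : ∀ X : C, F.map (T.η.app X) ≫ lam.app X = T.η.app (F.obj X))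
    (hmul : ∀ X : C, F.map (T.μ.app X) ≫ lam.app X =
      lam.app (T.obj X) ≫ T.map (lam.app X) ≫ T.μ.app (F.obj X))
    (ρ : ∀ X : C, G.obj (T.obj X) ⟶ T.obj (G.obj X))
    (hsq : ∀ X : C, q.app (T.obj X) ≫ ρ X = lam.app X ≫ T.map (q.app X)) :
    (∀ {X Y : C} (f : X ⟶ Y),
        G.map (T.map f) ≫ ρ Y = ρ X ≫ T.map (G.map f)) ∧
    (∀ X : C, G.map (T.η.app X) ≫ ρ X = T.η.app (G.obj X)) ∧
    (∀ X : C, G.map (T.μ.app X) ≫ ρ X =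
        ρ (T.obj X) ≫ T.map (ρ X) ≫ T.μ.app (G.obj X)) := by
  have hlamnat : ∀ {X Y : C} (f : X ⟶ Y),
      F.map (T.map f) ≫ lam.app Y = lam.app X ≫ T.map (F.map f) := by
    intro X Y f
    simpa using lam.naturality f
  refine ⟨?_, ?_, ?_⟩
  · intro X Y f
    rw [← cancel_epi (q.app (T.obj X))]
    calc q.app (T.obj X) ≫ G.map (T.map f) ≫ ρ Y
        = F.map (T.map f) ≫ q.app (T.obj Y) ≫ ρ Y := by
          rw [← Category.assoc, ← q.naturality, Category.assoc]
      _ = F.map (T.map f) ≫ lam.app Y ≫ T.map (q.app Y) := by rw [hsq]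
      _ = lam.app X ≫ T.map (F.map f) ≫ T.map (q.app Y) := by
          rw [← Category.assoc, hlamnat, Category.assoc]
      _ = lam.app X ≫ T.map (q.app X) ≫ T.map (G.map f) := by
          rw [← T.map_comp, ← T.map_comp, q.naturality]
      _ = q.app (T.obj X) ≫ ρ X ≫ T.map (G.map f) := by
          rw [← Category.assoc, ← hsq, Category.assoc]
  · intro X
    rw [← cancel_epi (q.app X)]
    calc q.app X ≫ G.map (T.η.app X) ≫ ρ X
        = F.map (T.η.app X) ≫ q.app (T.obj X) ≫ ρ X := by
          rw [← Category.assoc, ← q.naturality, Category.assoc]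
      _ = F.map (T.η.app X) ≫ lam.app X ≫ T.map (q.app X) := by rw [hsq]
      _ = T.η.app (F.obj X) ≫ T.map (q.app X) := by
          rw [← Category.assoc, hunit]
      _ = q.app X ≫ T.η.app (G.obj X) := (T.η.naturality _).symm
  · intro X
    rw [← cancel_epi (q.app (T.obj (T.obj X)))]
    calc q.app (T.obj (T.obj X)) ≫ G.map (T.μ.app X) ≫ ρ X
        = F.map (T.μ.app X) ≫ q.app (T.obj X) ≫ ρ X := by
          rw [← Category.assoc, ← q.naturality, Category.assoc]
      _ = F.map (T.μ.app X) ≫ lam.app X ≫ T.map (q.app X) := by rw [hsq]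
      _ = lam.app (T.obj X) ≫ T.map (lam.app X) ≫ T.μ.app (F.obj X) ≫
            T.map (q.app X) := by
          rw [← Category.assoc, ← Category.assoc, ← Category.assoc, hmul]
          simp [Category.assoc]
      _ = lam.app (T.obj X) ≫ T.map (lam.app X) ≫ T.map (T.map (q.app X)) ≫
            T.μ.app (G.obj X) := by
          have := T.μ.naturality (q.app X)
          simp only [Functor.comp_map] at this
          rw [← this]
      _ = lam.app (T.obj X) ≫ T.map (q.app (T.obj X)) ≫ T.map (ρ X) ≫
            T.μ.app (G.obj X) := by
          rw [← Category.assoc (T.map _), ← Category.assoc (T.map _),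
            ← T.map_comp, ← T.map_comp, hsq]
      _ = q.app (T.obj (T.obj X)) ≫ ρ (T.obj X) ≫ T.map (ρ X) ≫
            T.μ.app (G.obj X) := by
          rw [← Category.assoc, ← Category.assoc, ← hsq]
          simp [Category.assoc]
end
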